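/- In the dendriform algebra, the associative product * and the over product satisfy x/(y*z) = (x/y)*z for all planar binary trees x, y, z. -/

import Mathlib

/-- Planar binary trees: a leaf `∘` or an ordered pair of planar binary trees. -/
inductive PBT : Type
  | leaf : PBT
  | node : PBT → PBT → PBT
deriving DecidableEq

namespace PBT

/-- The degree: the number of internal vertices. -/
def deg : PBT → ℕ
  | leaf => 0
  | node l r => deg l + deg r + 1

/-- The over product `x/y`: graft the root of `x` onto the leftmost leaf of `y`. -/
def overG (x : PBT) : PBT → PBT
  | leaf => x
  | node l r => node (overG x l) r

/-- The under product `x\y`: graft the root of `y` onto the rightmost leaf of `x`. -/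
def under : PBT → PBT → PBT
  | leaf, y => y
  | node l r, y => node l (under r y)

/-- Left-right reversal: swap the two subtrees at every internal vertex. -/
def rev : PBT → PBT
  | leaf => leaf
  | node l r => node (rev r) (rev l)

/-- `move x y` : `y` is obtained from `x` by one elementary Tamari move,
replacing a subtree `(a (b c))` by `((a b) c)` (a right rotation, going down). -/
inductive move : PBT → PBT → Prop
  | rot (a b c : PBT) : move (node a (node b c)) (node (node a b) c)
  | left {a a' : PBT} (b : PBT) : move a a' → move (node a b) (node a' b)
  | right (a : PBT) {b b' : PBT} : move b b' → move (node a b) (node a b')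

/-- The Tamari order: `x ≤ y` iff `x` is obtained from `y` by a sequence of
elementary moves. -/
def tle (x y : PBT) : Prop := Relation.ReflTransGen move y x

/-- The left comb of degree `n`. -/
def leftComb : ℕ → PBT
  | 0 => leaf
  | n+1 => node (leftComb n) leaf

/-- The right comb of degree `n`. -/
def rightComb : ℕ → PBT
  | 0 => leaf
  | n+1 => node leaf (rightComb n)

end PBT

open Classical in
/-- The dendriform associative product `*` of two basis trees, as a formal
`ℤ`-linear combination of trees: `x * y` is the sum of all trees `z` with
`x/y ≤ z ≤ x\y` in the Tamari order. -/
noncomputable def starC (x y : PBT) : PBT → ℤ := fun z =>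
  if PBT.tle (x.overG y) z ∧ PBT.tle z (x.under y) then 1 else 0

/-!
Grafting `x` onto the leftmost leaf commutes with both products: `(x/y)/z = x/(y/z)` and,
`y` not being a leaf, `(x/y)\z = x/(y\z)`. So `(x/y)*z` is the Tamari interval from
`x/(y/z)` to `x/(y\z)`, and it suffices that `u ↦ x/u` is an order embedding whose image
contains every interval between two of its points. Both follow from one observation: a
Tamari move applied to `p/u` acts either inside `p` or inside `u`. A chain from `x/t` that
ever moves inside `x` can never come back to some `x/v`, since moves strictly decrease a
weight while preserving degrees.
-/

open Relation

namespace PBT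

theorem deg_overG (x : PBT) : ∀ u : PBT, (x.overG u).deg = x.deg + u.deg
  | leaf => by simp [overG, deg]
  | node l r => by simp only [overG, deg, deg_overG x l]; omega

theorem overG_assoc (x y : PBT) : ∀ z : PBT, (x.overG y).overG z = x.overG (y.overG z)
  | leaf => rfl
  | node l r => by simp [overG, overG_assoc x y l]

theorem overG_under (x : PBT) {y : PBT} (hy : y ≠ leaf) (z : PBT) :
    (x.overG y).under z = x.overG (y.under z) := by
  cases y with
  | leaf => exact absurd rfl hy
  | node l r => rfl

theorem overG_inj_of_deg_eq {x p : PBT} :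
    ∀ {u v : PBT}, x.overG u = p.overG v → x.deg = p.deg → x = p ∧ u = v
  | leaf, leaf, h, _ => ⟨h, rfl⟩
  | leaf, node l r, h, hd => by
      have := congrArg deg h
      simp only [overG, deg, deg_overG] at this
      omega
  | node l r, leaf, h, hd => by
      have := congrArg deg h
      simp only [overG, deg, deg_overG] at this
      omega
  | node l r, node l' r', h, hd => by
      simp only [overG, node.injEq] at h
      obtain ⟨rfl, rfl⟩ := overG_inj_of_deg_eq h.1 hd
      exact ⟨rfl, by rw [h.2]⟩

/-- A rotation `a (b c) ↦ (a b) c` lowers the weight by `deg c + 1`, so moves cannot cycle. -/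
def weight : PBT → ℕ
  | leaf => 0
  | node l r => weight l + weight r + deg r

theorem move.deg_eq {a b : PBT} (h : move a b) : a.deg = b.deg := by
  induction h with
  | rot => simp only [deg]; omega
  | left _ _ ih => simp [deg, ih]
  | right _ _ ih => simp [deg, ih]

theorem move.weight_lt {a b : PBT} (h : move a b) : b.weight < a.weight := by
  induction h with
  | rot => simp only [weight, deg]; omega
  | left _ _ ih => simp only [weight]; omega
  | right _ h ih => simp only [weight, h.deg_eq]; omega

theorem deg_eq_of_reflTransGen {a b : PBT} (h : ReflTransGen move a b) : a.deg = b.deg := by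
  induction h with
  | refl => rfl
  | tail _ hm ih => exact ih.trans hm.deg_eq

theorem weight_lt_of_transGen {a b : PBT} (h : TransGen move a b) : b.weight < a.weight := by
  induction h with
  | single hm => exact hm.weight_lt
  | tail _ hm ih => exact hm.weight_lt.trans ih

theorem not_transGen_move_self (a : PBT) : ¬TransGen move a a :=
  fun h => (weight_lt_of_transGen h).false

theorem move.overG (x : PBT) {u u' : PBT} (h : move u u') : move (x.overG u) (x.overG u') := by
  induction h with
  | rot a b c => exact move.rot (x.overG a) b c
  | left b _ ih => exact move.left b ih
  | right a h _ => exact move.right (x.overG a) h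

theorem move_overG_cases {p : PBT} : ∀ {u w : PBT}, move (p.overG u) w →
    (∃ p', move p p' ∧ w = p'.overG u) ∨ ∃ u', move u u' ∧ w = p.overG u'
  | leaf, w, h => .inl ⟨w, h, rfl⟩
  | node l r, _, h => by
    cases h with
    | rot _ b c => exact .inr ⟨_, move.rot l b c, rfl⟩
    | left _ hm =>
      rcases move_overG_cases hm with ⟨p', hp, rfl⟩ | ⟨l', hl, rfl⟩
      · exact .inl ⟨p', hp, rfl⟩
      · exact .inr ⟨_, move.left r hl, rfl⟩
    | right _ hm => exact .inr ⟨_, move.right l hm, rfl⟩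

theorem reflTransGen_overG_cases {p u w : PBT} (h : ReflTransGen move (p.overG u) w) :
    ∃ p' u', w = p'.overG u' ∧ (p' = p ∧ ReflTransGen move u u' ∨ TransGen move p p') := by
  induction h with
  | refl => exact ⟨p, u, rfl, .inl ⟨rfl, .refl⟩⟩
  | tail _ hm ih =>
    obtain ⟨p', u', rfl, hpu⟩ := ih
    rcases move_overG_cases hm with ⟨p'', hp, rfl⟩ | ⟨u'', hu, rfl⟩
    · refine ⟨p'', u', rfl, .inr ?_⟩
      rcases hpu with ⟨rfl, -⟩ | hp'
      · exact .single hp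
      · exact hp'.tail hp
    · refine ⟨p', u'', rfl, ?_⟩
      rcases hpu with ⟨rfl, hu'⟩ | hp'
      · exact .inl ⟨rfl, hu'.tail hu⟩
      · exact .inr hp'

theorem tle_overG_iff {x a b : PBT} : tle (x.overG a) (x.overG b) ↔ tle a b := by
  refine ⟨fun h => ?_, fun h => ReflTransGen.lift x.overG (fun _ _ => move.overG x) _ _ h⟩
  obtain ⟨p, u, he, ⟨rfl, hu⟩ | hp⟩ := reflTransGen_overG_cases h
  · rwa [(overG_inj_of_deg_eq he rfl).2]
  · obtain ⟨rfl, -⟩ := overG_inj_of_deg_eq he (deg_eq_of_reflTransGen hp.to_reflTransGen)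
    exact absurd hp (not_transGen_move_self x)

theorem exists_eq_overG_of_tle {x v w t : PBT} (h₁ : tle (x.overG v) w)
    (h₂ : tle w (x.overG t)) : ∃ u, w = x.overG u := by
  obtain ⟨p, u, rfl, ⟨rfl, -⟩ | hxp⟩ := reflTransGen_overG_cases h₂
  · exact ⟨u, rfl⟩
  obtain ⟨q, s, he, hpq⟩ := reflTransGen_overG_cases h₁
  replace hpq : ReflTransGen move p q := by
    rcases hpq with ⟨rfl, -⟩ | hpq
    exacts [.refl, hpq.to_reflTransGen]
  have hdeg : x.deg = q.deg :=
    (deg_eq_of_reflTransGen hxp.to_reflTransGen).trans (deg_eq_of_reflTransGen hpq)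
  obtain ⟨rfl, -⟩ := overG_inj_of_deg_eq he hdeg
  exact absurd (hxp.trans_left hpq) (not_transGen_move_self x)

end PBT

theorem stmt14_general (x y z : PBT) (hy : 1 ≤ y.deg) :
    (∀ u : PBT, starC (x.overG y) z (x.overG u) = starC y z u) ∧
    (∀ w : PBT, (∀ u : PBT, w ≠ x.overG u) → starC (x.overG y) z w = 0) := by
  classical
  have hy_ne : y ≠ PBT.leaf := by rintro rfl; simp [PBT.deg] at hy
  refine ⟨fun u => ?_, fun w hw => ?_⟩
  · simp only [starC, PBT.overG_assoc, PBT.overG_under x hy_ne, PBT.tle_overG_iff]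
  · refine if_neg fun ⟨h₁, h₂⟩ => ?_
    rw [PBT.overG_assoc] at h₁
    rw [PBT.overG_under x hy_ne] at h₂
    obtain ⟨u, rfl⟩ := PBT.exists_eq_overG_of_tle h₁ h₂
    exact hw u rfl

/-- In the dendriform algebra, `x/(y*z) = (x/y)*z`: the coefficient of `x/u`
in `(x/y)*z` equals the coefficient of `u` in `y*z`, and the coefficient in
`(x/y)*z` of any tree not of the form `x/u` vanishes. -/
theorem stmt14 (x y z : PBT) (hx : 1 ≤ x.deg) (hy : 1 ≤ y.deg) (hz : 1 ≤ z.deg) :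
    (∀ u : PBT, starC (x.overG y) z (x.overG u) = starC y z u) ∧
    (∀ w : PBT, (∀ u : PBT, w ≠ x.overG u) → starC (x.overG y) z w = 0) :=
  stmt14_general x y z hy
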